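/- arXiv:2504.00335 — 2 statements merged into one kernel-verified Lean document; each statement's English description precedes it below -/
import Mathlib

section
/- Let L, Ñ : 𝕋^n × 𝕋^ℓ → ℝ^{2n×n} and Ω(K): 𝕋^n × 𝕋^ℓ → ℝ^{2n×2n} with Ω antisymmetric pointwise, and suppose Lᵀ Ω(K) L = O_n and Ñᵀ Ω(K) L = I_n pointwise. Define A := −(1/2) Ñᵀ Ω(K) Ñ and N := L A + Ñ. Then Nᵀ Ω(K) N = O_n and Nᵀ Ω(K) L = I_n pointwise; consequently, the 2n×2n frame P = (L N) satisfies Pᵀ Ω(K) P = Ω₀, where Ω₀ = [[0, −I_n],[I_n, 0]]. -/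
open Matrix

/-!
Write `⟨X, Y⟩ := Xᵀ Ω Y`; antisymmetry of `Ω` gives `⟨X, Y⟩ᵀ = -⟨Y, X⟩`. For `N = L A + Ñ`
bilinearity and the hypotheses `⟨L, L⟩ = 0`, `⟨Ñ, L⟩ = 1` give `⟨N, L⟩ = 1`, `⟨L, N⟩ = -1` and
`⟨N, N⟩ = A - Aᵀ + ⟨Ñ, Ñ⟩` for every `A`. Since `⟨Ñ, Ñ⟩` is skew, `A = -½ ⟨Ñ, Ñ⟩` is the choice
that kills `⟨N, N⟩`, and the four blocks of `Pᵀ Ω P` are then those of `Ω₀`.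
-/

section Pairing

variable {R : Type*} [CommRing R] {m n : Type*} [Fintype m] {Ω : Matrix m m R}

theorem transpose_mul_mul_of_transpose_eq_neg (hΩ : Ωᵀ = -Ω) (X Y : Matrix m n R) :
    (Xᵀ * Ω * Y)ᵀ = -(Yᵀ * Ω * X) := by
  simp only [transpose_mul, transpose_transpose, hΩ, Matrix.mul_neg, Matrix.neg_mul,
    Matrix.mul_assoc]

theorem fromCols_transpose_mul_mul_fromCols (X Y : Matrix m n R) :
    (fromCols X Y)ᵀ * Ω * fromCols X Y =
      fromBlocks (Xᵀ * Ω * X) (Xᵀ * Ω * Y) (Yᵀ * Ω * X) (Yᵀ * Ω * Y) := by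
  rw [transpose_fromCols, fromRows_mul, fromRows_mul_fromCols]

theorem tangent_transpose_mul_mul_raw [DecidableEq n] {L Ñ : Matrix m n R} (hΩ : Ωᵀ = -Ω)
    (hÑL : Ñᵀ * Ω * L = 1) : Lᵀ * Ω * Ñ = -1 := by
  rw [← neg_neg (Lᵀ * Ω * Ñ), ← transpose_mul_mul_of_transpose_eq_neg hΩ, hÑL, transpose_one]

variable [Fintype n] [DecidableEq n] {L Ñ : Matrix m n R} (A : Matrix n n R)

theorem adapted_transpose_mul_mul_tangent (hLL : Lᵀ * Ω * L = 0) (hÑL : Ñᵀ * Ω * L = 1) :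
    (L * A + Ñ)ᵀ * Ω * L = 1 := by
  rw [transpose_add, transpose_mul, Matrix.add_mul, Matrix.add_mul, Matrix.mul_assoc Aᵀ,
    Matrix.mul_assoc Aᵀ, hLL, hÑL, Matrix.mul_zero, zero_add]

theorem tangent_transpose_mul_mul_adapted (hΩ : Ωᵀ = -Ω) (hLL : Lᵀ * Ω * L = 0)
    (hÑL : Ñᵀ * Ω * L = 1) : Lᵀ * Ω * (L * A + Ñ) = -1 := by
  rw [Matrix.mul_add, ← Matrix.mul_assoc, hLL, Matrix.zero_mul, zero_add,
    tangent_transpose_mul_mul_raw hΩ hÑL]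

theorem adapted_transpose_mul_mul_adapted (hΩ : Ωᵀ = -Ω) (hLL : Lᵀ * Ω * L = 0)
    (hÑL : Ñᵀ * Ω * L = 1) :
    (L * A + Ñ)ᵀ * Ω * (L * A + Ñ) = A - Aᵀ + Ñᵀ * Ω * Ñ := by
  have hLN : (L * A + Ñ)ᵀ * Ω * Ñ = Aᵀ * (Lᵀ * Ω * Ñ) + Ñᵀ * Ω * Ñ := by
    simp only [transpose_add, transpose_mul, Matrix.add_mul, Matrix.mul_assoc]
  rw [Matrix.mul_add, ← Matrix.mul_assoc, adapted_transpose_mul_mul_tangent A hLL hÑL, hLN,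
    tangent_transpose_mul_mul_raw hΩ hÑL]
  simp only [Matrix.one_mul, Matrix.mul_neg, Matrix.mul_one]
  abel

end Pairing

theorem neg_half_smul_sub_transpose_add_eq_zero {K n : Type*} [Field K] [NeZero (2 : K)]
    {B : Matrix n n K} (hB : Bᵀ = -B) :
    -((1 : K) / 2) • B - (-((1 : K) / 2) • B)ᵀ + B = 0 := by
  rw [transpose_smul, hB, smul_neg, neg_smul, sub_neg_eq_add, ← neg_add, ← add_smul, add_halves, one_smul,
    neg_add_cancel]

/-- symplectic adaptation of the frame. If `Lᵀ Ω(K) L = 0` and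
`Ñᵀ Ω(K) L = I` pointwise, with `Ω(K)` antisymmetric, then with
`A := −(1/2) Ñᵀ Ω(K) Ñ` and `N := L A + Ñ` one has `Nᵀ Ω(K) N = 0`,
`Nᵀ Ω(K) L = I`, and the frame `P = (L N)` satisfies `Pᵀ Ω(K) P = Ω₀`. -/
theorem symplectic_frame_adaptation (n ℓ : ℕ)
    (L Ntilde : (Fin n → ℝ) × (Fin ℓ → ℝ) → Matrix (Fin n ⊕ Fin n) (Fin n) ℝ)
    (ΩK : (Fin n → ℝ) × (Fin ℓ → ℝ) → Matrix (Fin n ⊕ Fin n) (Fin n ⊕ Fin n) ℝ)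
    (hanti : ∀ x, (ΩK x)ᵀ = -ΩK x)
    (hLL : ∀ x, (L x)ᵀ * ΩK x * L x = 0)
    (hNL : ∀ x, (Ntilde x)ᵀ * ΩK x * L x = 1) :
    ∀ x,
      let A : Matrix (Fin n) (Fin n) ℝ := -((1 : ℝ) / 2) • ((Ntilde x)ᵀ * ΩK x * Ntilde x)
      let N : Matrix (Fin n ⊕ Fin n) (Fin n) ℝ := L x * A + Ntilde x
      Nᵀ * ΩK x * N = 0 ∧ Nᵀ * ΩK x * L x = 1 ∧
        (Matrix.fromCols (L x) N)ᵀ * ΩK x * Matrix.fromCols (L x) N =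
          Matrix.fromBlocks 0 (-1) 1 0 := by
  intro x A N
  have hNN : Nᵀ * ΩK x * N = 0 := by
    rw [adapted_transpose_mul_mul_adapted A (hanti x) (hLL x) (hNL x)]
    exact neg_half_smul_sub_transpose_add_eq_zero
      (transpose_mul_mul_of_transpose_eq_neg (hanti x) _ _)
  have hNL' : Nᵀ * ΩK x * L x = 1 := adapted_transpose_mul_mul_tangent A (hLL x) (hNL x)
  refine ⟨hNN, hNL', ?_⟩
  rw [fromCols_transpose_mul_mul_fromCols, hLL x, hNN, hNL',
    tangent_transpose_mul_mul_adapted A (hanti x) (hLL x) (hNL x)]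
end

section
/- The triangular cohomological system 𝔏_{ω,α} ξ^N = η^N has a solution with zero-average only if ⟨η^N⟩ = 0; moreover, if ⟨η^N⟩ = 0 and ⟨T⟩ is invertible, the average ξ^N₀ = ⟨ξ^N⟩ is uniquely determined by the solvability (zero-average) condition of the second equation 𝔏_{ω,α} ξ^L = η^L − T ξ^N, namely ξ^N₀ = ⟨T⟩⁻¹ ⟨η^L − T R_{ω,α}(η^N)⟩. -/
open scoped BigOperators Real
open MeasureTheory Matrix

/-- A real-valued trigonometric polynomial on the torus `𝕋^n × 𝕋^ℓ`. -/
def IsTrigPolyOnTorus (n ℓ : ℕ) (f : (Fin n → ℝ) × (Fin ℓ → ℝ) → ℝ) : Prop :=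
  ∃ (F : Finset ((Fin n → ℤ) × (Fin ℓ → ℤ))) (c : ((Fin n → ℤ) × (Fin ℓ → ℤ)) → ℂ),
    ∀ x, (f x : ℂ) = ∑ k ∈ F, c k *
      Complex.exp (2 * (π : ℂ) * Complex.I *
        (((∑ i, (k.1 i : ℝ) * x.1 i) + ∑ j, (k.2 j : ℝ) * x.2 j : ℝ) : ℂ))

/-- The torus average of a scalar function (integral over a fundamental domain). -/
noncomputable def torusAvg (n ℓ : ℕ) (f : (Fin n → ℝ) × (Fin ℓ → ℝ) → ℝ) : ℝ :=
  ∫ x in Set.Icc (0 : (Fin n → ℝ) × (Fin ℓ → ℝ)) 1, f x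

/-!
Write a trigonometric polynomial as `∑ c_k e_k` with `e_k x = exp (2πi ⟨k, x⟩)`. The characters
`e_k` are orthonormal on the unit box, so the average of `∑ c_k e_k` is `c_0`, and the derivative
along `v = (ω, α)` multiplies `c_k` by `2πi ⟨k, v⟩`. Hence every `-∂_v ξ` has zero average, and since
`⟨k, v⟩ ≠ 0` for `k ≠ 0`, two solutions of `-∂_v ξ = η` differ by a constant. So
`ξ^N = R(η^N) + ⟨ξ^N⟩`; substituting this into the second equation and averaging gives
`⟨η^L - T R(η^N)⟩ = ⟨T⟩ ⟨ξ^N⟩`.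
-/

theorem integral_Icc_exp_two_pi_I_int_mul (m : ℤ) :
    ∫ t in Set.Icc (0 : ℝ) 1, Complex.exp (2 * π * Complex.I * m * t) =
      if m = 0 then 1 else 0 := by
  rw [integral_Icc_eq_integral_Ioc, ← intervalIntegral.integral_of_le zero_le_one]
  split_ifs with hm
  · simp [hm]
  · have hc : 2 * π * Complex.I * m ≠ 0 := by simp [Real.pi_ne_zero, hm]
    have h1 : Complex.exp (2 * π * Complex.I * m) = 1 := by
      rw [← Complex.exp_int_mul_two_pi_mul_I m]
      ring_nf
    simp [integral_exp_mul_complex hc, h1]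

theorem setIntegral_Icc_pi_prod {𝕜 ι : Type*} [RCLike 𝕜] [Fintype ι] (f : ι → ℝ → 𝕜)
    (a b : ι → ℝ) :
    ∫ x in Set.Icc a b, ∏ i, f i (x i) = ∏ i, ∫ t in Set.Icc (a i) (b i), f i t := by
  rw [← Set.pi_univ_Icc, volume_pi, Measure.restrict_pi_pi, integral_fintype_prod_eq_prod]

theorem integral_Icc_pi_exp_two_pi_I_sum {ι : Type*} [Fintype ι] (a : ι → ℤ) :
    ∫ x in Set.Icc (0 : ι → ℝ) 1,
        Complex.exp (2 * π * Complex.I * ((∑ i, (a i : ℝ) * x i : ℝ) : ℂ)) =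
      if a = 0 then 1 else 0 := by
  classical
  have hprod : ∀ x : ι → ℝ, Complex.exp (2 * π * Complex.I * ((∑ i, (a i : ℝ) * x i : ℝ) : ℂ)) =
      ∏ i, Complex.exp (2 * π * Complex.I * (a i) * (x i)) := by
    intro x
    rw [← Complex.exp_sum, Complex.ofReal_sum, Finset.mul_sum]
    push_cast
    simp_rw [mul_assoc]
  simp_rw [hprod]
  rw [setIntegral_Icc_pi_prod fun i t => Complex.exp (2 * π * Complex.I * a i * t)]
  simp only [Pi.zero_apply, Pi.one_apply, integral_Icc_exp_two_pi_I_int_mul, Finset.prod_ite_zero,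
    Finset.prod_const_one, Finset.mem_univ, forall_const, funext_iff]

theorem continuous_mulVec_const_apply {X ι κ : Type*} [TopologicalSpace X] [Fintype κ]
    {T : X → Matrix ι κ ℝ} (hT : ∀ i j, Continuous fun x => T x i j) (c : κ → ℝ) (i : ι) :
    Continuous fun x => (T x *ᵥ c) i :=
  continuous_finsetSum _ fun j _ => (hT i j).mul continuous_const

theorem fderiv_apply_apply {𝕜 E ι : Type*} [NontriviallyNormedField 𝕜] [NormedAddCommGroup E]
    [NormedSpace 𝕜 E] [Fintype ι] {Φ : E → ι → 𝕜} {x : E}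
    (h : ∀ i, DifferentiableAt 𝕜 (fun y => Φ y i) x) (v : E) (i : ι) :
    fderiv 𝕜 Φ x v i = fderiv 𝕜 (fun y => Φ y i) x v := by
  rw [fderiv_apply (differentiableAt_pi.2 h) i]
  rfl

theorem neg_fderiv_apply_apply_eq {𝕜 E ι : Type*} [NontriviallyNormedField 𝕜]
    [NormedAddCommGroup E] [NormedSpace 𝕜 E] [Fintype ι] {Φ Ψ : E → ι → 𝕜} {v : E}
    (hΦ : ∀ i, Differentiable 𝕜 fun x => Φ x i) (h : ∀ x, -fderiv 𝕜 Φ x v = Ψ x) (i : ι) (x : E) :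
    -fderiv 𝕜 (fun y => Φ y i) x v = Ψ x i := by
  rw [← fderiv_apply_apply (fun i => hΦ i x), ← h]
  rfl

section Torus

variable {n ℓ : ℕ}

local notation "Ω" => (Fin n → ℝ) × (Fin ℓ → ℝ)
local notation "Λ" => (Fin n → ℤ) × (Fin ℓ → ℤ)

noncomputable def freqPairing (k : Λ) : Ω →L[ℝ] ℝ :=
  (∑ i, (k.1 i : ℝ) • ContinuousLinearMap.proj i ∘L ContinuousLinearMap.fst ℝ _ _) +
    ∑ j, (k.2 j : ℝ) • ContinuousLinearMap.proj j ∘L ContinuousLinearMap.snd ℝ _ _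

theorem freqPairing_apply (k : Λ) (x : Ω) :
    freqPairing k x = (∑ i, (k.1 i : ℝ) * x.1 i) + ∑ j, (k.2 j : ℝ) * x.2 j := by
  simp [freqPairing]

@[simp]
theorem freqPairing_zero (x : Ω) : freqPairing 0 x = 0 := by
  simp [freqPairing_apply]

theorem freqPairing_add (k m : Λ) (x : Ω) :
    freqPairing (k + m) x = freqPairing k x + freqPairing m x := by
  simp only [freqPairing_apply, Prod.fst_add, Prod.snd_add, Pi.add_apply, Int.cast_add, add_mul,
    Finset.sum_add_distrib]
  ring

noncomputable def torusChar (k : Λ) (x : Ω) : ℂ :=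
  Complex.exp (2 * π * Complex.I * freqPairing k x)

@[simp]
theorem torusChar_zero (x : Ω) : torusChar 0 x = 1 := by
  simp [torusChar]

theorem torusChar_add (k m : Λ) (x : Ω) :
    torusChar (k + m) x = torusChar k x * torusChar m x := by
  rw [torusChar, torusChar, torusChar, ← Complex.exp_add, freqPairing_add]
  push_cast
  ring_nf

theorem continuous_torusChar (k : Λ) : Continuous (torusChar k) := by
  unfold torusChar
  fun_prop

theorem hasFDerivAt_torusChar (k : Λ) (x : Ω) :
    HasFDerivAt (torusChar k)
      ((2 * π * Complex.I * torusChar k x) • Complex.ofRealCLM ∘L freqPairing k) x := by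
  have h := ((Complex.ofRealCLM ∘L freqPairing k).hasFDerivAt (x := x)).const_mul
    (2 * π * Complex.I) |>.cexp
  rw [smul_smul, mul_comm (Complex.exp _)] at h
  exact h

theorem integral_torusChar (k : Λ) :
    ∫ x in Set.Icc (0 : Ω) 1, torusChar k x = if k = 0 then 1 else 0 := by
  have hsplit : ∀ x : Ω, torusChar k x =
      Complex.exp (2 * π * Complex.I * ((∑ i, (k.1 i : ℝ) * x.1 i : ℝ) : ℂ)) *
        Complex.exp (2 * π * Complex.I * ((∑ j, (k.2 j : ℝ) * x.2 j : ℝ) : ℂ)) := by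
    intro x
    rw [torusChar, freqPairing_apply, ← Complex.exp_add]
    push_cast
    ring_nf
  simp_rw [hsplit]
  rw [show Set.Icc (0 : Ω) 1 = Set.Icc (0 : Fin n → ℝ) 1 ×ˢ Set.Icc (0 : Fin ℓ → ℝ) 1 from
      (Set.Icc_prod_Icc _ _ _ _).symm,
    Measure.volume_eq_prod, setIntegral_prod_mul
      (fun y : Fin n → ℝ => Complex.exp (2 * π * Complex.I * ((∑ i, (k.1 i : ℝ) * y i : ℝ) : ℂ)))
      (fun y : Fin ℓ → ℝ => Complex.exp (2 * π * Complex.I * ((∑ j, (k.2 j : ℝ) * y j : ℝ) : ℂ))),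
    integral_Icc_pi_exp_two_pi_I_sum, integral_Icc_pi_exp_two_pi_I_sum]
  rcases k with ⟨k₁, k₂⟩
  by_cases h₁ : k₁ = 0 <;> by_cases h₂ : k₂ = 0 <;> simp [h₁, h₂]

noncomputable def trigSum (F : Finset Λ) (c : Λ → ℂ) (x : Ω) : ℂ :=
  ∑ k ∈ F, c k * torusChar k x

theorem integral_trigSum (F : Finset Λ) (c : Λ → ℂ) :
    ∫ x in Set.Icc (0 : Ω) 1, trigSum F c x = if 0 ∈ F then c 0 else 0 := by
  classical
  unfold trigSum
  rw [integral_finsetSum _ fun k _ => ((continuous_torusChar k).integrableOn_Icc).const_mul _]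
  simp_rw [integral_const_mul, integral_torusChar, mul_ite, mul_one, mul_zero]
  exact Finset.sum_ite_eq' F 0 c

theorem hasFDerivAt_trigSum (F : Finset Λ) (c : Λ → ℂ) (x : Ω) :
    HasFDerivAt (trigSum F c)
      (∑ k ∈ F, (c k * (2 * π * Complex.I * torusChar k x)) •
        Complex.ofRealCLM ∘L freqPairing k) x := by
  unfold trigSum
  refine HasFDerivAt.fun_sum fun k _ => ?_
  simpa only [smul_smul] using (hasFDerivAt_torusChar k x).const_mul (c k)

theorem coeff_eq_zero_of_trigSum_eq_zero {F : Finset Λ} {c : Λ → ℂ}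
    (h : ∀ x, trigSum F c x = 0) {m : Λ} (hm : m ∈ F) : c m = 0 := by
  classical
  have hshift : ∀ x, trigSum F c x * torusChar (-m) x =
      trigSum (F.image (· - m)) (fun k => c (k + m)) x := by
    intro x
    rw [trigSum, trigSum, Finset.sum_image fun _ _ _ _ hkl => sub_left_injective hkl, Finset.sum_mul]
    refine Finset.sum_congr rfl fun k _ => ?_
    rw [sub_add_cancel, mul_assoc, ← torusChar_add, ← sub_eq_add_neg]
  have hint := integral_trigSum (F.image (· - m)) (fun k => c (k + m))
  simp_rw [← hshift, h, zero_mul, integral_zero, zero_add] at hint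
  have h0 : (0 : Λ) ∈ F.image (· - m) := Finset.mem_image.2 ⟨m, hm, sub_self m⟩
  rw [if_pos h0] at hint
  exact hint.symm

theorem volume_Icc_zero_one_prod : volume (Set.Icc (0 : Ω) 1) = 1 := by
  rw [← Set.Icc_prod_Icc, Measure.volume_eq_prod, Measure.prod_prod, Real.volume_Icc_pi,
    Real.volume_Icc_pi]
  simp

theorem torusAvg_neg (f : Ω → ℝ) : torusAvg n ℓ (fun x => -f x) = -torusAvg n ℓ f :=
  integral_neg f

theorem torusAvg_add {f g : Ω → ℝ} (hf : Continuous f) (hg : Continuous g) :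
    torusAvg n ℓ (fun x => f x + g x) = torusAvg n ℓ f + torusAvg n ℓ g :=
  integral_add hf.integrableOn_Icc hg.integrableOn_Icc

theorem torusAvg_add_const {f : Ω → ℝ} (hf : Continuous f) (a : ℝ) :
    torusAvg n ℓ (fun x => f x + a) = torusAvg n ℓ f + a := by
  rw [torusAvg_add hf continuous_const]
  simp [torusAvg, measureReal_def, volume_Icc_zero_one_prod]

theorem torusAvg_mulVec_const {ι κ : Type*} [Fintype κ] {T : Ω → Matrix ι κ ℝ}
    (hT : ∀ i j, Continuous fun x => T x i j) (c : κ → ℝ) (i : ι) :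
    torusAvg n ℓ (fun x => (T x *ᵥ c) i) =
      ((of fun i j => torusAvg n ℓ fun x => T x i j) *ᵥ c) i := by
  simp only [mulVec, dotProduct, of_apply, torusAvg]
  rw [integral_finsetSum (f := fun j x => T x i j * c j) _
    fun j _ => ((hT i j).mul continuous_const).integrableOn_Icc]
  simp_rw [integral_mul_const]

theorem isTrigPolyOnTorus_iff {f : Ω → ℝ} :
    IsTrigPolyOnTorus n ℓ f ↔ ∃ F c, ∀ x, (f x : ℂ) = trigSum F c x := by
  simp only [IsTrigPolyOnTorus, trigSum, torusChar, freqPairing_apply]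

theorem ofReal_torusAvg_eq {f : Ω → ℝ} {F : Finset Λ} {c : Λ → ℂ}
    (hf : ∀ x, (f x : ℂ) = trigSum F c x) :
    (torusAvg n ℓ f : ℂ) = if 0 ∈ F then c 0 else 0 := by
  rw [torusAvg, ← integral_complex_ofReal]
  simp_rw [hf]
  exact integral_trigSum F c

theorem differentiable_of_ofReal_eq_trigSum {f : Ω → ℝ} {F : Finset Λ} {c : Λ → ℂ}
    (hf : ∀ x, (f x : ℂ) = trigSum F c x) : Differentiable ℝ f := by
  have hre : f = fun y => (trigSum F c y).re := funext fun y => by rw [← hf, Complex.ofReal_re]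
  rw [hre]
  exact fun x => Complex.reCLM.differentiableAt.comp x (hasFDerivAt_trigSum F c x).differentiableAt

theorem ofReal_fderiv_apply_eq {f : Ω → ℝ} {F : Finset Λ} {c : Λ → ℂ}
    (hf : ∀ x, (f x : ℂ) = trigSum F c x) (x v : Ω) :
    (fderiv ℝ f x v : ℂ) = trigSum F (fun k => 2 * π * Complex.I * freqPairing k v * c k) x := by
  have hcoe : HasFDerivAt (trigSum F c) (Complex.ofRealCLM ∘L fderiv ℝ f x) x := by
    rw [← funext hf]
    exact Complex.ofRealCLM.hasFDerivAt.comp x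
      ((differentiable_of_ofReal_eq_trigSum hf) x).hasFDerivAt
  have h := congrArg (· v) (hcoe.unique (hasFDerivAt_trigSum F c x))
  simp only [ContinuousLinearMap.comp_apply, Complex.ofRealCLM_apply, _root_.sum_apply,
    _root_.smul_apply, smul_eq_mul] at h
  rw [h, trigSum]
  refine Finset.sum_congr rfl fun k _ => ?_
  ring

namespace IsTrigPolyOnTorus

variable {f g : (Fin n → ℝ) × (Fin ℓ → ℝ) → ℝ}

theorem differentiable (hf : IsTrigPolyOnTorus n ℓ f) : Differentiable ℝ f := by
  obtain ⟨F, c, hf⟩ := isTrigPolyOnTorus_iff.1 hf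
  exact differentiable_of_ofReal_eq_trigSum hf

theorem continuous (hf : IsTrigPolyOnTorus n ℓ f) : Continuous f :=
  hf.differentiable.continuous

theorem fderiv_apply (hf : IsTrigPolyOnTorus n ℓ f) (v : Ω) :
    IsTrigPolyOnTorus n ℓ (fun x => fderiv ℝ f x v) := by
  obtain ⟨F, c, hf⟩ := isTrigPolyOnTorus_iff.1 hf
  exact isTrigPolyOnTorus_iff.2 ⟨F, _, fun x => ofReal_fderiv_apply_eq hf x v⟩

theorem sub (hf : IsTrigPolyOnTorus n ℓ f) (hg : IsTrigPolyOnTorus n ℓ g) :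
    IsTrigPolyOnTorus n ℓ (fun x => f x - g x) := by
  classical
  obtain ⟨F, c, hf⟩ := isTrigPolyOnTorus_iff.1 hf
  obtain ⟨G, d, hg⟩ := isTrigPolyOnTorus_iff.1 hg
  refine isTrigPolyOnTorus_iff.2
    ⟨F ∪ G, fun k => (if k ∈ F then c k else 0) - (if k ∈ G then d k else 0), fun x => ?_⟩
  simp only [Complex.ofReal_sub, hf, hg, trigSum, sub_mul, Finset.sum_sub_distrib, ite_mul,
    zero_mul, Finset.sum_ite_mem, Finset.union_inter_cancel_left, Finset.union_inter_cancel_right]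

theorem torusAvg_fderiv_apply (hf : IsTrigPolyOnTorus n ℓ f) (v : Ω) :
    torusAvg n ℓ (fun x => fderiv ℝ f x v) = 0 := by
  obtain ⟨F, c, hf⟩ := isTrigPolyOnTorus_iff.1 hf
  have h := ofReal_torusAvg_eq fun x => ofReal_fderiv_apply_eq hf x v
  simp only [freqPairing_zero, Complex.ofReal_zero, mul_zero, zero_mul, ite_self] at h
  exact_mod_cast h

theorem torusAvg_neg_fderiv_apply_add (hf : IsTrigPolyOnTorus n ℓ f) (v : Ω) (hg : Continuous g) :
    torusAvg n ℓ (fun x => -fderiv ℝ f x v + g x) = torusAvg n ℓ g := by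
  rw [torusAvg_add (f := fun x => -fderiv ℝ f x v) (hf.fderiv_apply v).continuous.neg hg,
    torusAvg_neg, hf.torusAvg_fderiv_apply, neg_zero, zero_add]

theorem apply_eq_of_fderiv_apply_eq_zero (hf : IsTrigPolyOnTorus n ℓ f) {v : Ω}
    (hv : ∀ k : Λ, k ≠ 0 → freqPairing k v ≠ 0) (hd : ∀ x, fderiv ℝ f x v = 0) (x y : Ω) :
    f x = f y := by
  obtain ⟨F, c, hf⟩ := isTrigPolyOnTorus_iff.1 hf
  have hc : ∀ k ∈ F, k ≠ 0 → c k = 0 := fun k hk hk0 => by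
    have h := coeff_eq_zero_of_trigSum_eq_zero (fun x => by
      rw [← ofReal_fderiv_apply_eq hf, hd, Complex.ofReal_zero]) hk
    simpa [Real.pi_ne_zero, hv k hk0] using h
  have hconst : ∀ z, trigSum F c z = ∑ k ∈ F, if k = 0 then c k else 0 := fun z =>
    Finset.sum_congr rfl fun k hk => by
      by_cases hk0 : k = 0 <;> simp [hk0, hc k hk]
  exact_mod_cast (hf x).trans ((hconst x).trans ((hconst y).symm.trans (hf y).symm))

theorem exists_eq_add_const_of_fderiv_apply_eq (hf : IsTrigPolyOnTorus n ℓ f)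
    (hg : IsTrigPolyOnTorus n ℓ g) {v : Ω} (hv : ∀ k : Λ, k ≠ 0 → freqPairing k v ≠ 0)
    (hfg : ∀ x, fderiv ℝ f x v = fderiv ℝ g x v) : ∃ a, ∀ x, f x = g x + a := by
  refine ⟨f 0 - g 0, fun x => ?_⟩
  have h := (hf.sub hg).apply_eq_of_fderiv_apply_eq_zero hv (fun y => by
    rw [fderiv_fun_sub (hf.differentiable y) (hg.differentiable y), _root_.sub_apply, hfg,
      sub_self]) x 0
  linarith

end IsTrigPolyOnTorus

end Torus

theorem triangular_system_solvability_general (n ℓ : ℕ) (ω : Fin n → ℝ) (α : Fin ℓ → ℝ)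
    (hind : ∀ (k : (Fin n → ℤ) × (Fin ℓ → ℤ)), k ≠ (0, 0) →
      (∑ i, (k.1 i : ℝ) * ω i) + ∑ j, (k.2 j : ℝ) * α j ≠ 0)
    (T : (Fin n → ℝ) × (Fin ℓ → ℝ) → Matrix (Fin n) (Fin n) ℝ)
    (ηL ηN ξL ξN RN : (Fin n → ℝ) × (Fin ℓ → ℝ) → Fin n → ℝ)
    (hT : ∀ i j, IsTrigPolyOnTorus n ℓ (fun x => T x i j))
    (hξL : ∀ i, IsTrigPolyOnTorus n ℓ (fun x => ξL x i))
    (hξN : ∀ i, IsTrigPolyOnTorus n ℓ (fun x => ξN x i))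
    (hRN : ∀ i, IsTrigPolyOnTorus n ℓ (fun x => RN x i))
    -- `ξ^N` solves the first equation
    (hξNsol : ∀ x, -(fderiv ℝ ξN x (ω, α)) = ηN x)
    -- `RN = R_{ω,α}(η^N)` : the zero-average solution of the first equation
    (hRNsol : ∀ x, -(fderiv ℝ RN x (ω, α)) = ηN x)
    (hRNavg : ∀ i, torusAvg n ℓ (fun x => RN x i) = 0)
    -- `ξ^L` solves the second equation exactly (its solvability condition)
    (hξLsol : ∀ x, -(fderiv ℝ ξL x (ω, α)) = fun i => ηL x i - (T x).mulVec (ξN x) i)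
    (aT : Matrix (Fin n) (Fin n) ℝ)
    (haT : aT = Matrix.of fun i j => torusAvg n ℓ (fun x => T x i j))
    (haTinv : IsUnit aT.det) :
    (∀ i, torusAvg n ℓ (fun x => ηN x i) = 0) ∧
      (fun i => torusAvg n ℓ (fun x => ξN x i)) =
        aT⁻¹.mulVec (fun i => torusAvg n ℓ (fun x => ηL x i - (T x).mulVec (RN x) i)) := by
  have hv : ∀ k : (Fin n → ℤ) × (Fin ℓ → ℤ), k ≠ 0 → freqPairing k (ω, α) ≠ 0 := fun k hk => by
    simpa only [freqPairing_apply] using hind k hk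
  have hξN_eq := neg_fderiv_apply_apply_eq (fun i => (hξN i).differentiable) hξNsol
  have hRN_eq := neg_fderiv_apply_apply_eq (fun i => (hRN i).differentiable) hRNsol
  have hξL_eq : ∀ i x, -fderiv ℝ (fun y => ξL y i) x (ω, α) = ηL x i - (T x *ᵥ ξN x) i :=
    neg_fderiv_apply_apply_eq (fun i => (hξL i).differentiable) hξLsol
  choose c hc using fun i => (hξN i).exists_eq_add_const_of_fderiv_apply_eq (hRN i) hv
    fun x => neg_inj.1 ((hξN_eq i x).trans (hRN_eq i x).symm)
  refine ⟨fun i => ?_, ?_⟩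
  · simp_rw [← hξN_eq i]
    rw [torusAvg_neg, (hξN i).torusAvg_fderiv_apply, neg_zero]
  have havg_ξN : (fun i => torusAvg n ℓ fun x => ξN x i) = c := funext fun i => by
    simp_rw [hc i]
    rw [torusAvg_add_const (hRN i).continuous, hRNavg, zero_add]
  have havg_rhs : (fun i => torusAvg n ℓ fun x => ηL x i - (T x *ᵥ RN x) i) = aT *ᵥ c :=
    funext fun i => by
      have h : ∀ x, ηL x i - (T x *ᵥ RN x) i =
          -fderiv ℝ (fun y => ξL y i) x (ω, α) + (T x *ᵥ c) i := fun x => by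
        rw [hξL_eq, show ξN x = RN x + c from funext (hc · x), mulVec_add, Pi.add_apply]
        ring
      simp_rw [h]
      rw [(hξL i).torusAvg_neg_fderiv_apply_add _
          (continuous_mulVec_const_apply (fun i j => (hT i j).continuous) c i),
        torusAvg_mulVec_const (fun i j => (hT i j).continuous), haT]
  rw [havg_ξN, havg_rhs, mulVec_mulVec, nonsing_inv_mul aT haTinv, one_mulVec]

/-- solvability of the triangular cohomological system.
If `𝔏_{ω,α} ξ^N = η^N` has a (trigonometric polynomial) solution then `⟨η^N⟩ = 0`;
moreover, if `⟨T⟩` is invertible and `ξ^L` solves `𝔏_{ω,α} ξ^L = η^L − T ξ^N` exactly,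
then the average `⟨ξ^N⟩` is uniquely determined by the zero-average (solvability)
condition of that second equation, namely `⟨ξ^N⟩ = ⟨T⟩⁻¹ ⟨η^L − T R_{ω,α}(η^N)⟩`,
`R_{ω,α}(η^N)` being the zero-average solution of the first equation.
Here `𝔏_{ω,α} f (x) = −Df(x)(ω,α)`. -/
theorem triangular_system_solvability (n ℓ : ℕ) (ω : Fin n → ℝ) (α : Fin ℓ → ℝ)
    (hind : ∀ (k : (Fin n → ℤ) × (Fin ℓ → ℤ)), k ≠ (0, 0) →
      (∑ i, (k.1 i : ℝ) * ω i) + ∑ j, (k.2 j : ℝ) * α j ≠ 0)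
    (T : (Fin n → ℝ) × (Fin ℓ → ℝ) → Matrix (Fin n) (Fin n) ℝ)
    (ηL ηN ξL ξN RN : (Fin n → ℝ) × (Fin ℓ → ℝ) → Fin n → ℝ)
    (hT : ∀ i j, IsTrigPolyOnTorus n ℓ (fun x => T x i j))
    (hηL : ∀ i, IsTrigPolyOnTorus n ℓ (fun x => ηL x i))
    (hηN : ∀ i, IsTrigPolyOnTorus n ℓ (fun x => ηN x i))
    (hξL : ∀ i, IsTrigPolyOnTorus n ℓ (fun x => ξL x i))
    (hξN : ∀ i, IsTrigPolyOnTorus n ℓ (fun x => ξN x i))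
    (hRN : ∀ i, IsTrigPolyOnTorus n ℓ (fun x => RN x i))
    -- `ξ^N` solves the first equation
    (hξNsol : ∀ x, -(fderiv ℝ ξN x (ω, α)) = ηN x)
    -- `RN = R_{ω,α}(η^N)` : the zero-average solution of the first equation
    (hRNsol : ∀ x, -(fderiv ℝ RN x (ω, α)) = ηN x)
    (hRNavg : ∀ i, torusAvg n ℓ (fun x => RN x i) = 0)
    -- `ξ^L` solves the second equation exactly (its solvability condition)
    (hξLsol : ∀ x, -(fderiv ℝ ξL x (ω, α)) = fun i => ηL x i - (T x).mulVec (ξN x) i)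
    (aT : Matrix (Fin n) (Fin n) ℝ)
    (haT : aT = Matrix.of fun i j => torusAvg n ℓ (fun x => T x i j))
    (haTinv : IsUnit aT.det) :
    (∀ i, torusAvg n ℓ (fun x => ηN x i) = 0) ∧
      (fun i => torusAvg n ℓ (fun x => ξN x i)) =
        aT⁻¹.mulVec (fun i => torusAvg n ℓ (fun x => ηL x i - (T x).mulVec (RN x) i)) :=
  triangular_system_solvability_general n ℓ ω α hind T ηL ηN ξL ξN RN hT hξL hξN hRN hξNsol hRNsol
    hRNavg hξLsol aT haT haTinv
end
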